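/- Let T be a quantum torsor over a commutative ring K, with structure map μ : T → T ⊗ T^{op} ⊗ T written μ(x) = x⁽¹⁾ ⊗ x⁽²⁾ ⊗ x⁽³⁾. Then the map D : T ⊗ T → T ⊗ T ⊗ T defined by D(x ⊗ y) = x y⁽¹⁾ ⊗ y⁽²⁾ ⊗ y⁽³⁾ is a left T-linear map satisfying the descent datum conditions: (id_T ⊗ D)∘D = (id_T ⊗ 1_T ⊗ id_{T⊗T})∘D and γ ∘ D = id_{T⊗T}, where γ is the multiplication action of T on T ⊗ T. -/

import Mathlib

open TensorProduct

/-- Forget the opposite-algebra structure in the middle factor: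
`(T ⊗ T^op) ⊗ T → (T ⊗ T) ⊗ T`. -/
noncomputable def torsorForget (K T : Type*) [CommRing K] [Ring T] [Algebra K T] :
    ((T ⊗[K] Tᵐᵒᵖ) ⊗[K] T) →ₗ[K] (T ⊗[K] T) ⊗[K] T :=
  LinearMap.rTensor T
    (LinearMap.lTensor T (MulOpposite.opLinearEquiv K).symm.toLinearMap)

/-- The underlying `K`-linear map `T → (T ⊗ T) ⊗ T` of the torsor structure map
`μ : T → T ⊗ T^op ⊗ T`, written `ν(x) = x⁽¹⁾ ⊗ x⁽²⁾ ⊗ x⁽³⁾`. -/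
noncomputable def torsorNu (K T : Type*) [CommRing K] [Ring T] [Algebra K T]
    (μ : T →ₐ[K] (T ⊗[K] Tᵐᵒᵖ) ⊗[K] T) : T →ₗ[K] (T ⊗[K] T) ⊗[K] T :=
  torsorForget K T ∘ₗ μ.toLinearMap

/-- The map `D : T ⊗ T → T ⊗ T ⊗ T`, `D(x ⊗ y) = x y⁽¹⁾ ⊗ y⁽²⁾ ⊗ y⁽³⁾`. -/
noncomputable def torsorDescent (K T : Type*) [CommRing K] [Ring T] [Algebra K T]
    (μ : T →ₐ[K] (T ⊗[K] Tᵐᵒᵖ) ⊗[K] T) : (T ⊗[K] T) →ₗ[K] (T ⊗[K] T) ⊗[K] T :=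
  LinearMap.rTensor T (LinearMap.rTensor T (LinearMap.mul' K T)) ∘ₗ
    LinearMap.rTensor T (TensorProduct.assoc K T T T).symm.toLinearMap ∘ₗ
    (TensorProduct.assoc K T (T ⊗[K] T) T).symm.toLinearMap ∘ₗ
    LinearMap.lTensor T (torsorNu K T μ)

/-! Since `D(x ⊗ y) = (x ⊗ 1 ⊗ 1) · ν(y)`, all three identities reduce to the case `x = 1`.
Left linearity is then immediate and `γ ∘ D = id` is the axiom `y⁽¹⁾y⁽²⁾ ⊗ y⁽³⁾ = 1 ⊗ y`.
For the cocycle condition, `(id ⊗ D)(ν y) = y⁽¹⁾ ⊗ y⁽²⁾y⁽³⁾⁽¹⁾ ⊗ y⁽³⁾⁽²⁾ ⊗ y⁽³⁾⁽³⁾`;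
coassociativity moves the inner `ν` onto the first factor, where
`y⁽¹⁾⁽¹⁾ ⊗ y⁽¹⁾⁽²⁾y⁽¹⁾⁽³⁾ = y⁽¹⁾ ⊗ 1` collapses it to `y⁽¹⁾ ⊗ 1 ⊗ y⁽²⁾ ⊗ y⁽³⁾`. -/

open LinearMap

section MulLeftFirst

variable (K A M N : Type*) [CommSemiring K] [Semiring A] [Algebra K A]
  [AddCommMonoid M] [Module K M] [AddCommMonoid N] [Module K N]

noncomputable def mulLeftFirst : A ⊗[K] ((A ⊗[K] M) ⊗[K] N) →ₗ[K] (A ⊗[K] M) ⊗[K] N :=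
  lift (rTensorHom N ∘ₗ rTensorHom M ∘ₗ LinearMap.mul K A)

variable {K A M N}

@[simp]
lemma mulLeftFirst_tmul (x : A) (w : (A ⊗[K] M) ⊗[K] N) :
    mulLeftFirst K A M N (x ⊗ₜ w) = rTensor N (rTensor M (mulLeft K x)) w :=
  rfl

lemma mulLeftFirst_eq :
    mulLeftFirst K A M N =
      rTensor N (rTensor M (mul' K A)) ∘ₗ
        rTensor N (TensorProduct.assoc K A A M).symm.toLinearMap ∘ₗ
        (TensorProduct.assoc K A (A ⊗[K] M) N).symm.toLinearMap := by
  ext x a m n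
  simp

-- Both sides send `(((x ⊗ a) ⊗ b) ⊗ m) ⊗ n` to `x ⊗ ((a b ⊗ m) ⊗ n)`.
lemma lTensor_mulLeftFirst_comp_assoc {X : Type*} [AddCommMonoid X] [Module K X] :
    lTensor X (mulLeftFirst K A M N) ∘ₗ (TensorProduct.assoc K X A _).toLinearMap ∘ₗ
        (TensorProduct.assoc K (X ⊗[K] A) (A ⊗[K] M) N).toLinearMap ∘ₗ
        rTensor N (TensorProduct.assoc K (X ⊗[K] A) A M).toLinearMap =
      (TensorProduct.assoc K X (A ⊗[K] M) N).toLinearMap ∘ₗ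
        rTensor N (TensorProduct.assoc K X A M).toLinearMap ∘ₗ
        rTensor N (rTensor M
          (lTensor X (mul' K A) ∘ₗ (TensorProduct.assoc K X A A).toLinearMap)) := by
  ext x a b m n
  simp

end MulLeftFirst

lemma tmul_one_tmul_one_mul {R A B C : Type*} [CommSemiring R]
    [Semiring A] [Algebra R A] [Semiring B] [Algebra R B] [Semiring C] [Algebra R C]
    (a : A) (w : (A ⊗[R] B) ⊗[R] C) :
    ((a ⊗ₜ[R] (1 : B)) ⊗ₜ[R] (1 : C)) * w = rTensor C (rTensor B (mulLeft R a)) w := by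
  rw [← mulLeft_apply (R := R), mulLeft_tmul, mulLeft_tmul, mulLeft_one, mulLeft_one]
  rfl

lemma mul'_comp_rTensor_mulLeft {R A : Type*} [CommSemiring R] [Semiring A] [Algebra R A]
    (x : A) : mul' R A ∘ₗ rTensor A (mulLeft R x) = mulLeft R x ∘ₗ mul' R A := by
  ext a b
  simp [mul_assoc]

lemma lTensor_comp_assoc_comp_rTensor_rTensor {R M M' N P Q : Type*} [CommSemiring R]
    [AddCommMonoid M] [Module R M] [AddCommMonoid M'] [Module R M'] [AddCommMonoid N]
    [Module R N] [AddCommMonoid P] [Module R P] [AddCommMonoid Q] [Module R Q]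
    (f : N ⊗[R] P →ₗ[R] Q) (g : M →ₗ[R] M') :
    lTensor M' f ∘ₗ (TensorProduct.assoc R M' N P).toLinearMap ∘ₗ rTensor P (rTensor N g) =
      rTensor Q g ∘ₗ lTensor M f ∘ₗ (TensorProduct.assoc R M N P).toLinearMap := by
  ext m n p
  simp

section TorsorDescent

variable {K T : Type*} [CommRing K] [Ring T] [Algebra K T] {μ : T →ₐ[K] (T ⊗[K] Tᵐᵒᵖ) ⊗[K] T}

lemma torsorDescent_eq_mulLeftFirst_comp :
    torsorDescent K T μ = mulLeftFirst K T T T ∘ₗ lTensor T (torsorNu K T μ) := by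
  rw [mulLeftFirst_eq]
  rfl

lemma torsorDescent_tmul (x y : T) :
    torsorDescent K T μ (x ⊗ₜ y) = rTensor T (rTensor T (mulLeft K x)) (torsorNu K T μ y) := by
  rw [torsorDescent_eq_mulLeftFirst_comp]
  rfl

theorem torsorDescent_tmul_one_mul (a : T) (z : T ⊗[K] T) :
    torsorDescent K T μ ((a ⊗ₜ[K] (1 : T)) * z) =
      ((a ⊗ₜ[K] (1 : T)) ⊗ₜ[K] (1 : T)) * torsorDescent K T μ z := by
  have h : torsorDescent K T μ ∘ₗ mulLeft K (a ⊗ₜ[K] (1 : T)) =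
      mulLeft K ((a ⊗ₜ[K] (1 : T)) ⊗ₜ[K] (1 : T)) ∘ₗ torsorDescent K T μ := by
    refine TensorProduct.ext' fun x y => ?_
    simp only [comp_apply, mulLeft_apply, Algebra.TensorProduct.tmul_mul_tmul, one_mul,
      torsorDescent_tmul, tmul_one_tmul_one_mul, mulLeft_mul, rTensor_comp]
  exact LinearMap.congr_fun h z

theorem rTensor_mul'_torsorDescent
    (h_one_right : ∀ t : T, rTensor T (mul' K T) (torsorNu K T μ t) = 1 ⊗ₜ[K] t)
    (z : T ⊗[K] T) :
    rTensor T (mul' K T) (torsorDescent K T μ z) = z := by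
  have h : rTensor T (mul' K T) ∘ₗ torsorDescent K T μ = LinearMap.id := by
    refine TensorProduct.ext' fun x y => ?_
    rw [comp_apply, torsorDescent_tmul, ← comp_apply (rTensor T _), ← rTensor_comp,
      mul'_comp_rTensor_mulLeft, rTensor_comp, comp_apply, h_one_right]
    simp
  exact LinearMap.congr_fun h z

lemma lTensor_torsorDescent_assoc_torsorNu
    (hcoassoc : ∀ t : T,
      rTensor T (rTensor T (torsorNu K T μ)) (torsorNu K T μ t) =
        rTensor T (TensorProduct.assoc K (T ⊗[K] T) T T).symm.toLinearMap
          ((TensorProduct.assoc K (T ⊗[K] T) (T ⊗[K] T) T).symm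
            (lTensor (T ⊗[K] T) (torsorNu K T μ) (torsorNu K T μ t))))
    (h_one_left : ∀ t : T,
      lTensor T (mul' K T) (TensorProduct.assoc K T T T (torsorNu K T μ t)) = t ⊗ₜ[K] (1 : T))
    (y : T) :
    lTensor T (torsorDescent K T μ) (TensorProduct.assoc K T T T (torsorNu K T μ y)) =
      lTensor T (rTensor T (mk K T T 1)) (TensorProduct.assoc K T T T (torsorNu K T μ y)) := by
  have h_one_left' :
      lTensor T (mul' K T) ∘ₗ (TensorProduct.assoc K T T T).toLinearMap ∘ₗ torsorNu K T μ =
        (mk K T T).flip 1 :=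
    LinearMap.ext h_one_left
  have hcoassoc' : lTensor (T ⊗[K] T) (torsorNu K T μ) (torsorNu K T μ y) =
      TensorProduct.assoc K (T ⊗[K] T) (T ⊗[K] T) T
        (rTensor T (TensorProduct.assoc K (T ⊗[K] T) T T)
          (rTensor T (rTensor T (torsorNu K T μ)) (torsorNu K T μ y))) := by
    rw [hcoassoc y, ← rTensor_comp_apply]
    simp
  have h_collapse : (TensorProduct.assoc K T (T ⊗[K] T) T).toLinearMap ∘ₗ
        rTensor T (TensorProduct.assoc K T T T).toLinearMap ∘ₗ
        rTensor T (rTensor T ((mk K T T).flip 1)) =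
      lTensor T (rTensor T (mk K T T 1)) ∘ₗ (TensorProduct.assoc K T T T).toLinearMap := by
    ext
    rfl
  calc lTensor T (torsorDescent K T μ) (TensorProduct.assoc K T T T (torsorNu K T μ y))
      = lTensor T (mulLeftFirst K T T T)
          (TensorProduct.assoc K T T _
            (lTensor (T ⊗[K] T) (torsorNu K T μ) (torsorNu K T μ y))) := by
        rw [torsorDescent_eq_mulLeftFirst_comp, lTensor_tensor, lTensor_comp]
        simp
    _ = TensorProduct.assoc K T (T ⊗[K] T) T (rTensor T (TensorProduct.assoc K T T T)
          (rTensor T (rTensor T ((mk K T T).flip 1)) (torsorNu K T μ y))) := by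
        rw [hcoassoc', ← h_one_left']
        simpa only [comp_apply, rTensor_comp, LinearEquiv.coe_coe] using
          LinearMap.congr_fun lTensor_mulLeftFirst_comp_assoc
            (rTensor T (rTensor T (torsorNu K T μ)) (torsorNu K T μ y))
    _ = lTensor T (rTensor T (mk K T T 1)) (TensorProduct.assoc K T T T (torsorNu K T μ y)) :=
        LinearMap.congr_fun h_collapse _

theorem lTensor_torsorDescent_assoc_torsorDescent
    (hcoassoc : ∀ t : T,
      rTensor T (rTensor T (torsorNu K T μ)) (torsorNu K T μ t) =
        rTensor T (TensorProduct.assoc K (T ⊗[K] T) T T).symm.toLinearMap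
          ((TensorProduct.assoc K (T ⊗[K] T) (T ⊗[K] T) T).symm
            (lTensor (T ⊗[K] T) (torsorNu K T μ) (torsorNu K T μ t))))
    (h_one_left : ∀ t : T,
      lTensor T (mul' K T) (TensorProduct.assoc K T T T (torsorNu K T μ t)) = t ⊗ₜ[K] (1 : T))
    (z : T ⊗[K] T) :
    lTensor T (torsorDescent K T μ) (TensorProduct.assoc K T T T (torsorDescent K T μ z)) =
      lTensor T (rTensor T (mk K T T 1)) (TensorProduct.assoc K T T T (torsorDescent K T μ z)) := by
  have h : lTensor T (torsorDescent K T μ) ∘ₗ (TensorProduct.assoc K T T T).toLinearMap ∘ₗ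
        torsorDescent K T μ =
      lTensor T (rTensor T (mk K T T 1)) ∘ₗ (TensorProduct.assoc K T T T).toLinearMap ∘ₗ
        torsorDescent K T μ := by
    refine TensorProduct.ext' fun x y => ?_
    have h_mulLeft := fun f : T ⊗[K] T →ₗ[K] (T ⊗[K] T) ⊗[K] T => LinearMap.congr_fun
      (lTensor_comp_assoc_comp_rTensor_rTensor f (mulLeft K x)) (torsorNu K T μ y)
    simp only [comp_apply, LinearEquiv.coe_coe] at h_mulLeft ⊢
    rw [torsorDescent_tmul, h_mulLeft, h_mulLeft,
      lTensor_torsorDescent_assoc_torsorNu hcoassoc h_one_left]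
  exact LinearMap.congr_fun h z

end TorsorDescent

/-- Let `T` be a quantum torsor over `K` with structure map `μ : T → T ⊗ T^op ⊗ T`
(an algebra morphism satisfying coassociativity, `x⁽¹⁾x⁽²⁾ ⊗ x⁽³⁾ = 1 ⊗ x` and
`x⁽¹⁾ ⊗ x⁽²⁾x⁽³⁾ = x ⊗ 1`).  Then `D(x ⊗ y) = x y⁽¹⁾ ⊗ y⁽²⁾ ⊗ y⁽³⁾` is a left `T`-linear
map satisfying the descent datum conditions
`(id_T ⊗ D) ∘ D = (id_T ⊗ 1_T ⊗ id_{T⊗T}) ∘ D` and `γ ∘ D = id_{T⊗T}`, where `γ` is the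
multiplication action of `T` on `T ⊗ T`. -/
theorem torsor_descent_datum (K T : Type*) [CommRing K] [Ring T] [Algebra K T]
    (μ : T →ₐ[K] (T ⊗[K] Tᵐᵒᵖ) ⊗[K] T)
    (hcoassoc : ∀ t : T,
      (LinearMap.rTensor T (LinearMap.rTensor T (torsorNu K T μ))) (torsorNu K T μ t) =
        (LinearMap.rTensor T (TensorProduct.assoc K (T ⊗[K] T) T T).symm.toLinearMap)
          ((TensorProduct.assoc K (T ⊗[K] T) (T ⊗[K] T) T).symm
            ((LinearMap.lTensor (T ⊗[K] T) (torsorNu K T μ)) (torsorNu K T μ t))))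
    (h_one_right : ∀ t : T,
      (LinearMap.rTensor T (LinearMap.mul' K T)) (torsorNu K T μ t) = 1 ⊗ₜ[K] t)
    (h_one_left : ∀ t : T,
      (LinearMap.lTensor T (LinearMap.mul' K T))
        ((TensorProduct.assoc K T T T) (torsorNu K T μ t)) = t ⊗ₜ[K] (1 : T)) :
    (∀ (a : T) (z : T ⊗[K] T),
      torsorDescent K T μ ((a ⊗ₜ[K] (1 : T)) * z) =
        ((a ⊗ₜ[K] (1 : T)) ⊗ₜ[K] (1 : T)) * torsorDescent K T μ z) ∧
    (∀ z : T ⊗[K] T,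
      (LinearMap.lTensor T (torsorDescent K T μ))
          ((TensorProduct.assoc K T T T) (torsorDescent K T μ z)) =
        (LinearMap.lTensor T (LinearMap.rTensor T (TensorProduct.mk K T T 1)))
          ((TensorProduct.assoc K T T T) (torsorDescent K T μ z))) ∧
    (∀ z : T ⊗[K] T,
      (LinearMap.rTensor T (LinearMap.mul' K T)) (torsorDescent K T μ z) = z) :=
  ⟨torsorDescent_tmul_one_mul, lTensor_torsorDescent_assoc_torsorDescent hcoassoc h_one_left,
    rTensor_mul'_torsorDescent h_one_right⟩
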